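/- arXiv:math/0607589 — 3 statements merged into one kernel-verified Lean document; each statement's English description precedes it below -/
import Mathlib

section
/- In the symmetric group $S_n$, if $w$ is the longest element of a standard parabolic (Young) subgroup of type corresponding to the composition $\lambda$ of $n$, then the Robinson–Schensted correspondence associates to $w$ a pair of standard Young tableaux whose common shape is the conjugate partition $\lambda'$ of $\lambda$. -/
/-! Row insertion for the Robinson–Schensted correspondence. -/

/-- Insert `x` into a row `r`: returns the new row and the bumped entry, if any. -/
def rsInsertRow (r : List ℕ) (x : ℕ) : List ℕ × Option ℕ :=
  match r.findIdx? (fun y => x < y) with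
  | none => (r ++ [x], none)
  | some i => (r.set i x, some (r.getD i 0))

/-- Insert `x` into a tableau (list of rows); returns the new tableau together with the
index of the row in which a new box was created. -/
def rsInsertTab : List (List ℕ) → ℕ → List (List ℕ) × ℕ
  | [], x => ([[x]], 0)
  | r :: rs, x =>
    match rsInsertRow r x with
    | (r', none) => (r' :: rs, 0)
    | (r', some y) =>
      let (t, k) := rsInsertTab rs y
      (r' :: t, k + 1)

/-- Auxiliary function building the insertion tableau `P` and the recording tableau `Q`. -/
def rsAux : List (List ℕ) → List (List ℕ) → ℕ → List ℕ → List (List ℕ) × List (List ℕ)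
  | P, Q, _, [] => (P, Q)
  | P, Q, k, x :: xs =>
    let (P', r) := rsInsertTab P x
    let Q' := if r < Q.length then Q.set r (Q.getD r [] ++ [k]) else Q ++ [[k]]
    rsAux P' Q' (k + 1) xs

/-- The pair `(P, Q)` of tableaux associated to a word by the Robinson–Schensted
correspondence. -/
def rsPair (w : List ℕ) : List (List ℕ) × List (List ℕ) := rsAux [] [] 1 w

/-- The shape of a tableau, as the list of its row lengths. -/
def tabShape (t : List (List ℕ)) : List ℕ := t.map List.length

/-- The word (one-line notation) of the longest element of the Young subgroup of type `lam`:
each consecutive block of sizes `lam₁, lam₂, …` is reversed. -/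
def youngLongestWord : ℕ → List ℕ → List ℕ
  | _, [] => []
  | off, p :: rest =>
      ((List.range p).reverse.map (fun j => off + j + 1)) ++ youngLongestWord (off + p) rest

/-- The conjugate partition of a composition `lam`: its `i`-th part is the number of parts of
`lam` that are greater than `i`. -/
def conjPartition (lam : List ℕ) : List ℕ :=
  (List.range (lam.foldr max 0)).map (fun i => lam.countP (fun p => i < p))

/-! Let every entry of a tableau be at most `m`. Row-inserting the decreasing block
`m + p, …, m + 1` appends one box to each of its first `p` rows: the letter `x` is smaller
only than the letter `x + 1` just placed at the end of the first row, so it bumps it, `x + 1`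
bumps `x + 2` from the end of the second row, and so on. Hence after the blocks of sizes
`λ₁, …, λₖ` row `i` has length `#{j | i < λⱼ}`, the `i`-th part of `λ'`. The recording
tableau receives its box in the same row as the insertion tableau at every step, so the two
shapes agree. -/

def addCell : List ℕ → ℕ → List ℕ
  | [], _ => [1]
  | a :: s, 0 => (a + 1) :: s
  | a :: s, r + 1 => a :: addCell s r

lemma length_rsInsertRow (r : List ℕ) (x : ℕ) :
    (rsInsertRow r x).1.length = r.length + if (rsInsertRow r x).2 = none then 1 else 0 := by
  unfold rsInsertRow
  split <;> simp

lemma tabShape_rsInsertTab (P : List (List ℕ)) (x : ℕ) :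
    tabShape (rsInsertTab P x).1 = addCell (tabShape P) (rsInsertTab P x).2 := by
  induction P generalizing x with
  | nil => rfl
  | cons r rs ih =>
    have hlen := length_rsInsertRow r x
    rw [rsInsertTab]
    split <;> simp_all [tabShape, addCell]

lemma tabShape_recordingUpdate (Q : List (List ℕ)) (r k : ℕ) :
    tabShape (if r < Q.length then Q.set r (Q.getD r [] ++ [k]) else Q ++ [[k]]) =
      addCell (tabShape Q) r := by
  induction Q generalizing r with
  | nil => rfl
  | cons q Q ih =>
    cases r with
    | zero => simp [tabShape, addCell]
    | succ r =>
      have := ih r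
      by_cases h : r < Q.length
      · simp_all [tabShape, addCell]
      · simp only [tabShape, h, if_false] at this
        simp [tabShape, addCell, h, ← this]

def insertWord (P : List (List ℕ)) (w : List ℕ) : List (List ℕ) :=
  w.foldl (fun P x => (rsInsertTab P x).1) P

lemma rsAux_fst (P Q : List (List ℕ)) (k : ℕ) (w : List ℕ) :
    (rsAux P Q k w).1 = insertWord P w := by
  induction w generalizing P Q k with
  | nil => rfl
  | cons x w ih => simp [rsAux, ih, insertWord]

lemma tabShape_rsAux_snd (P Q : List (List ℕ)) (k : ℕ) (w : List ℕ)
    (h : tabShape Q = tabShape P) :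
    tabShape (rsAux P Q k w).2 = tabShape (rsAux P Q k w).1 := by
  induction w generalizing P Q k with
  | nil => exact h
  | cons x w ih =>
    simp only [rsAux]
    apply ih
    rw [tabShape_recordingUpdate, tabShape_rsInsertTab, h]

lemma rsInsertRow_of_forall_le (r : List ℕ) (x : ℕ) (h : ∀ y ∈ r, y ≤ x) :
    rsInsertRow r x = (r ++ [x], none) := by
  have : r.findIdx? (fun y => x < y) = none := by
    simpa [List.findIdx?_eq_none_iff] using h
  simp [rsInsertRow, this]

lemma rsInsertRow_append_singleton (r : List ℕ) (b x : ℕ) (h : ∀ y ∈ r, y ≤ x)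
    (hb : x < b) :
    rsInsertRow (r ++ [b]) x = (r ++ [x], some b) := by
  have : (r ++ [b]).findIdx? (fun y => x < y) = some r.length := by
    rw [List.findIdx?_eq_some_iff_getElem]
    refine ⟨by simp, by simpa using hb, fun j hj => ?_⟩
    simpa [List.getElem_append_left hj] using h _ (List.getElem_mem _)
  simp [rsInsertRow, this]

def appendStair : ℕ → ℕ → List (List ℕ) → List (List ℕ)
  | _, 0, P => P
  | y, j + 1, P => (P.headD [] ++ [y]) :: appendStair (y + 1) j P.tail

lemma List.flatten_eq_headD_append_flatten_tail {α : Type*} (L : List (List α)) :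
    L.flatten = L.headD [] ++ L.tail.flatten := by
  cases L <;> simp

lemma rsInsertTab_appendStair (j x : ℕ) (P : List (List ℕ)) (hP : ∀ y ∈ P.flatten, y < x) :
    (rsInsertTab (appendStair (x + 1) j P) x).1 = appendStair x (j + 1) P := by
  rw [P.flatten_eq_headD_append_flatten_tail, List.forall_mem_append] at hP
  obtain ⟨hhead, htail⟩ := hP
  replace hhead : ∀ y ∈ P.headD [], y ≤ x := fun y hy => (hhead y hy).le
  induction j generalizing x P with
  | zero =>
    cases P with
    | nil => rfl
    | cons r rs => simp [appendStair, rsInsertTab, rsInsertRow_of_forall_le r x hhead]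
  | succ j ih =>
    rw [appendStair, rsInsertTab, rsInsertRow_append_singleton _ _ _ hhead (Nat.lt_succ_self x)]
    rw [P.tail.flatten_eq_headD_append_flatten_tail, List.forall_mem_append] at htail
    simp only
    rw [ih (x + 1) P.tail (fun y hy => Nat.lt_succ_of_lt (htail.2 y hy))
      (fun y hy => Nat.le_succ_of_le (htail.1 y hy).le)]
    rfl

def blockWord (off p : ℕ) : List ℕ := (List.range p).reverse.map (fun j => off + j + 1)

lemma blockWord_succ (off p : ℕ) : blockWord off (p + 1) = (off + p + 1) :: blockWord off p := by
  simp [blockWord, List.range_succ]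

lemma insertWord_blockWord (off p : ℕ) (P : List (List ℕ))
    (hP : ∀ y ∈ P.flatten, y ≤ off) :
    insertWord P (blockWord off p) = appendStair (off + 1) p P := by
  suffices ∀ j, insertWord (appendStair (off + p + 1) j P) (blockWord off p) =
      appendStair (off + 1) (j + p) P by simpa [appendStair] using this 0
  induction p with
  | zero => intro j; rfl
  | succ p ih =>
    intro j
    rw [blockWord_succ, insertWord, List.foldl_cons, ← insertWord, ← add_assoc off p 1,
      rsInsertTab_appendStair j (off + p + 1) P (fun y hy => by have := hP y hy; omega), ih,
      add_right_comm, add_assoc]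

def addStair : ℕ → List ℕ → List ℕ
  | 0, s => s
  | j + 1, s => (s.headD 0 + 1) :: addStair j s.tail

lemma tabShape_appendStair (y j : ℕ) (P : List (List ℕ)) :
    tabShape (appendStair y j P) = addStair j (tabShape P) := by
  induction j generalizing y P with
  | zero => rfl
  | succ j ih =>
    rw [appendStair, addStair, tabShape, List.map_cons, ← tabShape, ih]
    cases P <;> simp [tabShape]

lemma lt_of_mem_flatten_appendStair (y j : ℕ) (P : List (List ℕ))
    (hP : ∀ z ∈ P.flatten, z < y) :
    ∀ z ∈ (appendStair y j P).flatten, z < y + j := by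
  induction j generalizing y P with
  | zero => exact hP
  | succ j ih =>
    rw [P.flatten_eq_headD_append_flatten_tail, List.forall_mem_append] at hP
    have htail := ih (y + 1) P.tail fun z hz => Nat.lt_succ_of_lt (hP.2 z hz)
    intro z hz
    simp only [appendStair, List.flatten_cons, List.mem_append, List.mem_singleton] at hz
    rcases hz with (hz | rfl) | hz
    · exact Nat.lt_of_lt_of_le (hP.1 z hz) (by omega)
    · omega
    · have := htail z hz; omega

lemma length_addStair (j : ℕ) (s : List ℕ) : (addStair j s).length = max j s.length := by
  induction j generalizing s with
  | zero => simp [addStair]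
  | succ j ih => cases s <;> simp [addStair, ih]

lemma getElem_addStair (j : ℕ) (s : List ℕ) (i : ℕ) (hi : i < (addStair j s).length) :
    (addStair j s)[i] = s.getD i 0 + if i < j then 1 else 0 := by
  induction j generalizing s i with
  | zero =>
    simp only [addStair] at hi ⊢
    simp [hi]
  | succ j ih => cases s <;> cases i <;> simp [addStair, ih]

lemma length_conjPartition (lam : List ℕ) : (conjPartition lam).length = lam.foldr max 0 := by
  simp [conjPartition]

lemma getD_conjPartition (lam : List ℕ) (i : ℕ) :
    (conjPartition lam).getD i 0 = lam.countP (fun p => i < p) := by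
  by_cases hi : i < lam.foldr max 0
  · simp [conjPartition, hi]
  · rw [List.getD_eq_default _ _ (by simpa [length_conjPartition] using hi), eq_comm,
      List.countP_eq_zero]
    intro p hp
    have := List.le_max_of_le' 0 hp le_rfl
    simp; omega

lemma foldr_max_append_singleton (lam : List ℕ) (p : ℕ) :
    (lam ++ [p]).foldr max 0 = max p (lam.foldr max 0) := by
  induction lam with
  | nil => rfl
  | cons a lam ih => simp [ih, max_left_comm]

lemma conjPartition_append_singleton (lam : List ℕ) (p : ℕ) :
    conjPartition (lam ++ [p]) = addStair p (conjPartition lam) := by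
  refine List.ext_getElem ?_ fun i _ _ => ?_
  · rw [length_addStair, length_conjPartition, length_conjPartition, foldr_max_append_singleton]
  · rw [getElem_addStair, getD_conjPartition]
    simp [conjPartition, List.countP_append]

lemma youngLongestWord_append_singleton (off : ℕ) (lam : List ℕ) (p : ℕ) :
    youngLongestWord off (lam ++ [p]) =
      youngLongestWord off lam ++ blockWord (off + lam.sum) p := by
  induction lam generalizing off with
  | nil => simp [youngLongestWord, blockWord]
  | cons a lam ih => simp [youngLongestWord, blockWord, ih, add_assoc]

lemma insertWord_append (P : List (List ℕ)) (u v : List ℕ) :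
    insertWord P (u ++ v) = insertWord (insertWord P u) v :=
  List.foldl_append

lemma insertWord_youngLongestWord_append_singleton (lam : List ℕ) (p : ℕ)
    (h : ∀ y ∈ (insertWord [] (youngLongestWord 0 lam)).flatten, y ≤ lam.sum) :
    insertWord [] (youngLongestWord 0 (lam ++ [p])) =
      appendStair (lam.sum + 1) p (insertWord [] (youngLongestWord 0 lam)) := by
  rw [youngLongestWord_append_singleton, zero_add, insertWord_append, insertWord_blockWord _ _ _ h]

lemma le_sum_of_mem_flatten_insertWord_youngLongestWord (lam : List ℕ) :
    ∀ y ∈ (insertWord [] (youngLongestWord 0 lam)).flatten, y ≤ lam.sum := by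
  induction lam using List.reverseRecOn with
  | nil => simp [insertWord, youngLongestWord]
  | append_singleton lam p ih =>
    intro y hy
    rw [insertWord_youngLongestWord_append_singleton lam p ih] at hy
    have := lt_of_mem_flatten_appendStair _ p _ (fun z hz => Nat.lt_succ_of_le (ih z hz)) y hy
    simp only [List.sum_append, List.sum_singleton]
    omega

lemma tabShape_insertWord_youngLongestWord (lam : List ℕ) :
    tabShape (insertWord [] (youngLongestWord 0 lam)) = conjPartition lam := by
  induction lam using List.reverseRecOn with
  | nil => rfl
  | append_singleton lam p ih =>
    rw [insertWord_youngLongestWord_append_singleton lam p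
        (le_sum_of_mem_flatten_insertWord_youngLongestWord lam),
      tabShape_appendStair, ih, conjPartition_append_singleton]

theorem rs_shape_of_young_longest_element_general (lam : List ℕ) :
    tabShape (rsPair (youngLongestWord 0 lam)).1 = conjPartition lam ∧
    tabShape (rsPair (youngLongestWord 0 lam)).2 = conjPartition lam := by
  have hP : tabShape (rsPair (youngLongestWord 0 lam)).1 = conjPartition lam := by
    rw [rsPair, rsAux_fst, tabShape_insertWord_youngLongestWord]
  refine ⟨hP, ?_⟩
  rw [rsPair, tabShape_rsAux_snd _ _ _ _ rfl, ← rsPair, hP]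

/-- In `Sₙ`, the Robinson–Schensted correspondence associates to the longest element of the
Young subgroup of type `lam` a pair of standard Young tableaux whose common shape is the
conjugate partition `lam'`. -/
theorem rs_shape_of_young_longest_element (n : ℕ) (lam : List ℕ)
    (hpos : ∀ p ∈ lam, 0 < p) (hsum : lam.sum = n) :
    tabShape (rsPair (youngLongestWord 0 lam)).1 = conjPartition lam ∧
    tabShape (rsPair (youngLongestWord 0 lam)).2 = conjPartition lam :=
  rs_shape_of_young_longest_element_general lam
end

section
/- The Möbius function of the Bruhat order on a Coxeter group $W$ is given by $\mu(y, x) = (-1)^{l(x) - l(y)}$ for all $y \leq x$ in Bruhat order. -/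
open Finset
open scoped Classical

variable {B W : Type*} [Group W] {M : CoxeterMatrix B}

/-- The Bruhat order on a Coxeter group: `y ≤ x` iff some (equivalently, any) reduced word
for `x` contains a subword which is a word for `y`. -/
def BruhatLE (cs : CoxeterSystem M W) (y x : W) : Prop :=
  ∃ ω : List B, cs.IsReduced ω ∧ cs.wordProd ω = x ∧
    ∃ ω' : List B, ω'.Sublist ω ∧ cs.wordProd ω' = y

/-
Strong exchange comes from the action of `W` on `W × ZMod 2` in which `s` sends `(t, ε)` to
`(s t s, ε + [t = s])`: its second coordinate records, mod 2, how often `t` occurs in the right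
inversion sequence of a word for `w`, so this parity does not depend on the word. With strong
exchange, the subword order coincides with the order generated by length-increasing reflection
steps, and therefore has the lifting property at a right descent `s` of `x`. Lifting gives
`∑_{y ≤ z ≤ x} (-1)^ℓ(z) = 0` for `y ≠ x`: if `s` is not a descent of `y`, then `z ↦ z s` is a
sign-reversing involution of `[y, x]`; if it is, then `[y, x] ∪ [ys, xs] = [ys, x]` and
`[y, x] ∩ [ys, xs] = [y, xs]`, which reduces the sum to shorter intervals. So the sign function
satisfies the recursion defining `μ`, and that recursion determines `μ`.
-/

theorem eq_of_sum_filter_rel_eq_zero {α R : Type*} [Fintype α] [AddCommGroup R]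
    (r : α → α → Prop) (rank : α → ℕ) (hrefl : ∀ x, r x x)
    (hrank : ∀ y x, r y x → y ≠ x → rank y < rank x) {μ ν : α → α → R}
    (hdiag : ∀ x, μ x x = ν x x)
    (hμ : ∀ y x, r y x → y ≠ x → ∑ z ∈ univ.filter (fun z => r y z ∧ r z x), μ y z = 0)
    (hν : ∀ y x, r y x → y ≠ x → ∑ z ∈ univ.filter (fun z => r y z ∧ r z x), ν y z = 0) :
    ∀ y x, r y x → μ y x = ν y x := by
  intro y x hyx
  induction hn : rank x using Nat.strong_induction_on generalizing x with
  | _ n ih =>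
  rcases eq_or_ne y x with rfl | hne
  · exact hdiag y
  set I := univ.filter (fun z => r y z ∧ r z x)
  have hx : x ∈ I := by simp [I, hyx, hrefl]
  have hrest : ∑ z ∈ I.erase x, μ y z = ∑ z ∈ I.erase x, ν y z := by
    refine sum_congr rfl fun z hz => ?_
    obtain ⟨hzx, hz⟩ := mem_erase.mp hz
    obtain ⟨hyz, hzx'⟩ := (mem_filter.mp hz).2
    exact ih _ (hn ▸ hrank z x hzx' hzx) z hyz rfl
  have hμx := hμ y x hyx hne
  have hνx := hν y x hyx hne
  rw [← add_sum_erase I _ hx] at hμx hνx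
  rw [hrest] at hμx
  exact add_right_cancel (hμx.trans hνx.symm)

theorem mul_mul_inv_eq_iff {G : Type*} [Group G] (a t b : G) :
    a * t * a⁻¹ = b ↔ t = a⁻¹ * b * a := by
  constructor <;> rintro rfl <;> group

namespace CoxeterSystem

variable (cs : CoxeterSystem M W)

local prefix:100 "s" => cs.simple
local prefix:100 "π" => cs.wordProd
local prefix:100 "ℓ" => cs.length

noncomputable def simplePerm (i : B) : Equiv.Perm (W × ZMod 2) :=
  Function.Involutive.toPerm (fun p => (s i * p.1 * s i, p.2 + if p.1 = s i then 1 else 0)) <| by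
    rintro ⟨t, ε⟩
    have hconj : s i * t * s i = s i ↔ t = s i := by
      simpa using mul_mul_inv_eq_iff (s i) t (s i)
    ext
    · simp [mul_assoc]
    · by_cases ht : t = s i
      · subst ht
        simp [add_assoc, CharTwo.add_self_eq_zero]
      · simp [ht, hconj]

theorem simplePerm_apply (i : B) (t : W) (ε : ZMod 2) :
    cs.simplePerm i (t, ε) = (s i * t * s i, ε + if t = s i then 1 else 0) := rfl

theorem simplePerm_mul_pow_apply (i j : B) (k : ℕ) (t : W) (ε : ZMod 2) :
    ((cs.simplePerm i * cs.simplePerm j) ^ k) (t, ε) =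
      ((s i * s j) ^ k * t * ((s i * s j) ^ k)⁻¹,
        ε + ∑ p ∈ range (2 * k), if t = s j * (s i * s j) ^ p then 1 else 0) := by
  induction k generalizing t ε with
  | zero => simp
  | succ k ih =>
    have hfirst : s j * t * s j = s i ↔ t = s j * (s i * s j) ^ 1 := by
      simpa [mul_assoc] using mul_mul_inv_eq_iff (s j) t (s i)
    have hshift (p : ℕ) : s i * (s j * t * s j) * s i = s j * (s i * s j) ^ p ↔
        t = s j * (s i * s j) ^ (p + 2) := by
      have := mul_mul_inv_eq_iff (s i * s j) t (s j * (s i * s j) ^ p)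
      simp only [mul_inv_rev, inv_simple] at this
      rw [pow_succ, pow_succ']
      simpa only [mul_assoc] using this
    rw [pow_succ, Equiv.Perm.mul_apply, Equiv.Perm.mul_apply, simplePerm_apply, simplePerm_apply,
      ih, hfirst]
    simp only [hshift, Prod.mk.injEq]
    constructor
    · simp [pow_succ, mul_assoc]
    · rw [show 2 * (k + 1) = 2 * k + 1 + 1 by ring, sum_range_succ', sum_range_succ']
      simp only [pow_zero, mul_one]
      ring

theorem isLiftable_simplePerm : M.IsLiftable cs.simplePerm := by
  intro i j
  ext ⟨t, ε⟩ : 1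
  have hperiod (p : ℕ) : s j * (s i * s j) ^ (M i j + p) = s j * (s i * s j) ^ p := by
    rw [pow_add, simple_mul_simple_pow, one_mul]
  rw [simplePerm_mul_pow_apply, two_mul, sum_range_add]
  simp [hperiod, CharTwo.add_self_eq_zero]

noncomputable def reflectionRep : W →* Equiv.Perm (W × ZMod 2) :=
  cs.lift ⟨cs.simplePerm, cs.isLiftable_simplePerm⟩

theorem reflectionRep_wordProd (ω : List B) (t : W) (ε : ZMod 2) :
    cs.reflectionRep (π ω) (t, ε) =
      (π ω * t * (π ω)⁻¹, ε + ((cs.rightInvSeq ω).count t : ZMod 2)) := by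
  induction ω generalizing ε with
  | nil => simp
  | cons i ω ih =>
    have hcond := mul_mul_inv_eq_iff (π ω) t (s i)
    rw [wordProd_cons, map_mul, Equiv.Perm.mul_apply, ih, reflectionRep, lift_apply_simple,
      simplePerm_apply, rightInvSeq, List.count_cons, hcond]
    ext
    · simp [mul_assoc]
    · simp only [beq_iff_eq, @eq_comm W _ t]
      split_ifs <;> simp [add_assoc]

/-- The number of occurrences of `t` in the right inversion sequence of any word for `w`,
modulo `2`. -/
noncomputable def inversionParity (w t : W) : ZMod 2 := (cs.reflectionRep w (t, 0)).2

theorem inversionParity_wordProd (ω : List B) (t : W) :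
    cs.inversionParity (π ω) t = (cs.rightInvSeq ω).count t := by
  simp [inversionParity, reflectionRep_wordProd]

theorem reflectionRep_apply (w t : W) (ε : ZMod 2) :
    cs.reflectionRep w (t, ε) = (w * t * w⁻¹, ε + cs.inversionParity w t) := by
  obtain ⟨ω, -, rfl⟩ := cs.exists_isReduced w
  rw [reflectionRep_wordProd, inversionParity_wordProd]

theorem inversionParity_mul (a b t : W) :
    cs.inversionParity (a * b) t = cs.inversionParity b t + cs.inversionParity a (b * t * b⁻¹) := by
  rw [inversionParity, map_mul, Equiv.Perm.mul_apply, reflectionRep_apply, reflectionRep_apply,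
    zero_add]

theorem inversionParity_one (t : W) : cs.inversionParity 1 t = 0 := by
  simp [inversionParity]

theorem inversionParity_simple (i : B) (t : W) :
    cs.inversionParity (s i) t = if t = s i then 1 else 0 := by
  simp [inversionParity, reflectionRep, simplePerm_apply]

theorem inversionParity_self {t : W} (ht : cs.IsReflection t) : cs.inversionParity t t = 1 := by
  obtain ⟨u, i, rfl⟩ := ht
  have hconj : u⁻¹ * (u * s i * u⁻¹) * u⁻¹⁻¹ = s i := by group
  have hone := cs.inversionParity_mul u u⁻¹ (u * s i * u⁻¹)
  rw [mul_inv_cancel, inversionParity_one, hconj] at hone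
  rw [cs.inversionParity_mul (u * s i), hconj, inversionParity_mul, inversionParity_simple,
    inv_simple, simple_mul_simple_cancel_right, if_pos rfl]
  linear_combination -hone

theorem length_mul_lt_of_inversionParity_ne_zero {w t : W} (h : cs.inversionParity w t ≠ 0) :
    ℓ (w * t) < ℓ w := by
  obtain ⟨ω, hω, rfl⟩ := cs.exists_isReduced w
  rw [inversionParity_wordProd] at h
  have hmem : t ∈ cs.rightInvSeq ω := by
    by_contra hmem
    simp [List.count_eq_zero.mpr hmem] at h
  exact (cs.isRightInversion_of_mem_rightInvSeq hω hmem).2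

theorem inversionParity_ne_zero_of_length_mul_lt {w t : W} (ht : cs.IsReflection t)
    (h : ℓ (w * t) < ℓ w) : cs.inversionParity w t ≠ 0 := by
  intro h0
  have hne : cs.inversionParity (w * t) t ≠ 0 := by
    rw [inversionParity_mul, inversionParity_self cs ht, ht.mul_self, one_mul, ht.inv, h0]
    decide
  have := cs.length_mul_lt_of_inversionParity_ne_zero hne
  rw [mul_assoc, ht.mul_self, mul_one] at this
  omega

theorem strong_exchange {ω : List B} {t : W} (ht : cs.IsReflection t)
    (h : ℓ (π ω * t) < ℓ (π ω)) : ∃ j < ω.length, π (ω.eraseIdx j) = π ω * t := by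
  have hmem : t ∈ cs.rightInvSeq ω := by
    have := cs.inversionParity_ne_zero_of_length_mul_lt ht h
    rw [inversionParity_wordProd] at this
    exact List.count_pos_iff.mp (Nat.pos_of_ne_zero (by rintro h; simp [h] at this))
  obtain ⟨j, hj, rfl⟩ := List.getElem_of_mem hmem
  rw [length_rightInvSeq] at hj
  refine ⟨j, hj, ?_⟩
  rw [← wordProd_mul_getD_rightInvSeq, List.getD_eq_getElem]

theorem isReduced_append_singleton_iff {ω : List B} {i : B} :
    cs.IsReduced (ω ++ [i]) ↔ cs.IsReduced ω ∧ ¬cs.IsRightDescent (π ω) i := by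
  have hle := cs.length_wordProd_le ω
  have hsimple := cs.length_mul_simple (π ω) i
  rw [not_isRightDescent_iff, IsReduced, IsReduced, wordProd_append, wordProd_singleton,
    List.length_append, List.length_singleton]
  omega

theorem exists_isReduced_sublist (ω : List B) :
    ∃ ω' : List B, ω'.Sublist ω ∧ cs.IsReduced ω' ∧ π ω' = π ω := by
  induction ω using List.reverseRecOn with
  | nil => exact ⟨[], List.Sublist.slnil, by simp [IsReduced], rfl⟩
  | append_singleton ω i ih =>
    obtain ⟨ω', hsub, hred, hprod⟩ := ih
    rw [wordProd_append, wordProd_singleton, ← hprod]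
    by_cases hi : cs.IsRightDescent (π ω') i
    · obtain ⟨j, hj, hj'⟩ := cs.strong_exchange (cs.isReflection_simple i) hi
      refine ⟨ω'.eraseIdx j, (List.eraseIdx_sublist ω' j).trans (hsub.trans
        (List.sublist_append_left ω [i])), ?_, hj'⟩
      have := (isRightDescent_iff cs).mp hi
      rw [IsReduced] at hred ⊢
      rw [hj', List.length_eraseIdx_of_lt hj]
      omega
    · exact ⟨ω' ++ [i], hsub.append (List.Sublist.refl [i]),
        (cs.isReduced_append_singleton_iff).mpr ⟨hred, hi⟩,
        by rw [wordProd_append, wordProd_singleton]⟩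

end CoxeterSystem

namespace BruhatLE

variable {cs : CoxeterSystem M W}

local prefix:100 "s" => cs.simple
local prefix:100 "ℓ" => cs.length

protected theorem refl (cs : CoxeterSystem M W) (x : W) : BruhatLE cs x x := by
  obtain ⟨ω, hω, rfl⟩ := cs.exists_isReduced x
  exact ⟨ω, hω, rfl, ω, List.Sublist.refl ω, rfl⟩

theorem length_le {y x : W} (h : BruhatLE cs y x) : ℓ y ≤ ℓ x := by
  obtain ⟨ω, hω, rfl, ω', hsub, rfl⟩ := h
  exact (cs.length_wordProd_le ω').trans (hω.eq ▸ hsub.length_le)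

theorem eq_of_length_le {y x : W} (h : BruhatLE cs y x) (hl : ℓ x ≤ ℓ y) : y = x := by
  obtain ⟨ω, hω, rfl, ω', hsub, rfl⟩ := h
  have := cs.length_wordProd_le ω'
  rw [hsub.eq_of_length (le_antisymm hsub.length_le (by rw [← hω.eq]; omega))]

theorem length_lt_of_ne {y x : W} (h : BruhatLE cs y x) (hne : y ≠ x) : ℓ y < ℓ x :=
  lt_of_le_of_ne h.length_le fun hl => hne (h.eq_of_length_le hl.ge)

theorem mul_simple {u v : W} {i : B} (h : BruhatLE cs u v) (hv : ¬cs.IsRightDescent v i) :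
    BruhatLE cs (u * s i) (v * s i) := by
  obtain ⟨ω, hω, rfl, ω', hsub, rfl⟩ := h
  refine ⟨ω ++ [i], cs.isReduced_append_singleton_iff.mpr ⟨hω, hv⟩, ?_, ω' ++ [i],
    hsub.append (List.Sublist.refl [i]), ?_⟩ <;> simp [CoxeterSystem.wordProd_append]

theorem le_mul_simple {u v : W} {i : B} (h : BruhatLE cs u v) (hv : ¬cs.IsRightDescent v i) :
    BruhatLE cs u (v * s i) := by
  obtain ⟨ω, hω, rfl, ω', hsub, rfl⟩ := h
  refine ⟨ω ++ [i], cs.isReduced_append_singleton_iff.mpr ⟨hω, hv⟩, ?_, ω',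
    hsub.trans (List.sublist_append_left ω [i]), rfl⟩
  simp [CoxeterSystem.wordProd_append]

end BruhatLE

namespace CoxeterSystem

variable (cs : CoxeterSystem M W)

local prefix:100 "s" => cs.simple
local prefix:100 "π" => cs.wordProd
local prefix:100 "ℓ" => cs.length

def ReflectionStep (u v : W) : Prop := ∃ t, cs.IsReflection t ∧ v = u * t ∧ ℓ u < ℓ v

abbrev ReflectionChain : W → W → Prop := Relation.ReflTransGen cs.ReflectionStep

variable {cs}

theorem reflectionStep_mul_simple {w : W} {i : B} (hw : ¬cs.IsRightDescent w i) :
    cs.ReflectionStep w (w * s i) :=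
  ⟨s i, cs.isReflection_simple i, rfl, by rw [(not_isRightDescent_iff cs).mp hw]; omega⟩

theorem ReflectionChain.exists_sublist {y x : W} (h : cs.ReflectionChain y x) {τ : List B}
    (hτ : cs.IsReduced τ) (hx : π τ = x) :
    ∃ τ' : List B, τ'.Sublist τ ∧ cs.IsReduced τ' ∧ π τ' = y := by
  induction h generalizing τ with
  | refl => exact ⟨τ, List.Sublist.refl τ, hτ, hx⟩
  | @tail v _ _ hstep ih =>
    obtain ⟨t, ht, rfl, hl⟩ := hstep
    have hcancel : π τ * t = v := by rw [hx, mul_assoc, ht.mul_self, mul_one]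
    obtain ⟨j, -, hj⟩ := cs.strong_exchange ht (by rwa [hcancel, hx])
    obtain ⟨κ, hκ, hκred, hκprod⟩ := cs.exists_isReduced_sublist (τ.eraseIdx j)
    obtain ⟨τ', hsub, hred, hprod⟩ := ih hκred (by rw [hκprod, hj, hcancel])
    exact ⟨τ', hsub.trans (hκ.trans (List.eraseIdx_sublist τ j)), hred, hprod⟩

theorem ReflectionChain.bruhatLE {y x : W} (h : cs.ReflectionChain y x) : BruhatLE cs y x := by
  obtain ⟨τ, hτ, rfl⟩ := cs.exists_isReduced x
  obtain ⟨τ', hsub, -, rfl⟩ := h.exists_sublist hτ rfl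
  exact ⟨τ, hτ, rfl, τ', hsub, rfl⟩

theorem ReflectionChain.bruhatLE_mul_simple_or {u w : W} {i : B} (h : cs.ReflectionChain u w)
    (hw : cs.IsRightDescent w i) :
    BruhatLE cs u (w * s i) ∨ (cs.IsRightDescent u i ∧ BruhatLE cs (u * s i) (w * s i)) := by
  obtain ⟨ρ, hρ, hρw⟩ := cs.exists_isReduced (w * s i)
  have hw' := (isRightDescent_iff_not_isRightDescent_mul cs).mp hw
  have hρi : cs.IsReduced (ρ ++ [i]) := cs.isReduced_append_singleton_iff.mpr ⟨hρ, hρw ▸ hw'⟩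
  obtain ⟨ζ, hζ, hζred, rfl⟩ := h.exists_sublist hρi (by simp [wordProd_append, ← hρw])
  obtain ⟨a, b, rfl, ha, hb⟩ := List.sublist_append_iff.mp hζ
  rcases List.sublist_singleton.mp hb with rfl | rfl
  · exact .inl ⟨ρ, hρ, hρw.symm, a, ha, by simp⟩
  · obtain ⟨-, hai⟩ := cs.isReduced_append_singleton_iff.mp hζred
    rw [wordProd_append, wordProd_singleton, simple_mul_simple_cancel_right,
      isRightDescent_iff_not_isRightDescent_mul, simple_mul_simple_cancel_right]
    exact .inr ⟨hai, ρ, hρ, hρw.symm, a, ha, rfl⟩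

theorem ReflectionChain.bruhatLE_mul_simple {u w : W} {i : B} (h : cs.ReflectionChain u w)
    (hw : cs.IsRightDescent w i) : BruhatLE cs (u * s i) w := by
  have hw' := (isRightDescent_iff_not_isRightDescent_mul cs).mp hw
  rcases h.bruhatLE_mul_simple_or hw with h' | ⟨-, h'⟩
  · simpa using h'.mul_simple hw'
  · simpa using h'.le_mul_simple hw'

/-- `hK` is the induction hypothesis of `BruhatLE.reflectionChain`. -/
theorem ReflectionChain.mul_simple {u v : W} {i : B}
    (hK : ∀ w y, ℓ w ≤ ℓ v → BruhatLE cs y w → cs.ReflectionChain y w)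
    (h : cs.ReflectionChain u v) (hv : ¬cs.IsRightDescent v i) :
    cs.ReflectionChain (u * s i) (v * s i) := by
  induction h with
  | refl => exact .refl
  | @tail v' _ h hstep ih =>
    obtain ⟨t, ht, rfl, hl⟩ := hstep
    have hlast := reflectionStep_mul_simple hv
    by_cases hv' : cs.IsRightDescent v' i
    · have hchain := hK _ _ hl.le (ReflectionChain.bruhatLE_mul_simple h hv')
      exact (hchain.tail ⟨t, ht, rfl, hl⟩).tail hlast
    · refine (ih (fun w y hw => hK w y (by omega)) hv').tail ⟨s i * t * s i, ?_, ?_, ?_⟩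
      · simpa using ht.conj (s i)
      · simp [mul_assoc]
      · rw [(not_isRightDescent_iff cs).mp hv', (not_isRightDescent_iff cs).mp hv]
        omega

end CoxeterSystem

theorem BruhatLE.reflectionChain {cs : CoxeterSystem M W} {y x : W} (h : BruhatLE cs y x) :
    cs.ReflectionChain y x := by
  induction hn : cs.length x using Nat.strong_induction_on generalizing x y with
  | _ n ih =>
  obtain ⟨ω, hω, rfl, ω', hsub, rfl⟩ := h
  rcases ω.eq_nil_or_concat' with rfl | ⟨ξ, i, rfl⟩
  · obtain rfl := List.sublist_nil.mp hsub
    exact .refl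
  · obtain ⟨hξ, hi⟩ := cs.isReduced_append_singleton_iff.mp hω
    have hlt : cs.length (cs.wordProd ξ) < n := by
      rw [← hn, hω.eq, hξ.eq, List.length_append]
      simp
    have hK (w y : W) (hw : cs.length w ≤ cs.length (cs.wordProd ξ)) (h : BruhatLE cs y w) :
        cs.ReflectionChain y w :=
      ih _ (by omega) h rfl
    obtain ⟨a, b, rfl, ha, hb⟩ := List.sublist_append_iff.mp hsub
    have hchain := hK _ _ le_rfl ⟨ξ, hξ, rfl, a, ha, rfl⟩
    rcases List.sublist_singleton.mp hb with rfl | rfl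
    · simpa [CoxeterSystem.wordProd_append] using
        hchain.tail (CoxeterSystem.reflectionStep_mul_simple hi)
    · simpa [CoxeterSystem.wordProd_append] using hchain.mul_simple hK hi

namespace BruhatLE

variable {cs : CoxeterSystem M W}

local prefix:100 "s" => cs.simple

theorem trans {u v w : W} (huv : BruhatLE cs u v) (hvw : BruhatLE cs v w) : BruhatLE cs u w :=
  CoxeterSystem.ReflectionChain.bruhatLE (huv.reflectionChain.trans hvw.reflectionChain)

theorem mul_simple_le {u w : W} {i : B} (h : BruhatLE cs u w) (hw : cs.IsRightDescent w i) :
    BruhatLE cs (u * s i) w :=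
  h.reflectionChain.bruhatLE_mul_simple hw

theorem le_mul_simple_of_isRightDescent {u w : W} {i : B} (h : BruhatLE cs u w)
    (hw : cs.IsRightDescent w i) (hu : ¬cs.IsRightDescent u i) : BruhatLE cs u (w * s i) :=
  (h.reflectionChain.bruhatLE_mul_simple_or hw).resolve_right fun h' => hu h'.1

end BruhatLE

namespace CoxeterSystem

variable (cs : CoxeterSystem M W)

local prefix:100 "s" => cs.simple
local prefix:100 "ℓ" => cs.length

theorem neg_one_pow_length_mul_simple (w : W) (i : B) :
    (-1 : ℤ) ^ ℓ (w * s i) = -(-1) ^ ℓ w := by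
  rcases cs.length_mul_simple w i with h | h
  · rw [h, pow_succ, mul_neg_one]
  · rw [← h, pow_succ, mul_neg_one, neg_neg]

noncomputable def bruhatInterval [Fintype W] (y x : W) : Finset W :=
  univ.filter fun z => BruhatLE cs y z ∧ BruhatLE cs z x

variable {cs} [Fintype W]

theorem mem_bruhatInterval {y x z : W} :
    z ∈ cs.bruhatInterval y x ↔ BruhatLE cs y z ∧ BruhatLE cs z x := by
  simp [bruhatInterval]

theorem sum_bruhatInterval_neg_one_pow_of_not_isRightDescent {y x : W} {i : B}
    (hx : cs.IsRightDescent x i) (hy : ¬cs.IsRightDescent y i) :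
    ∑ z ∈ cs.bruhatInterval y x, (-1 : ℤ) ^ ℓ z = 0 := by
  refine sum_involution (fun z _ => z * s i) (fun z _ => ?_) (fun z _ _ => ?_) (fun z hz => ?_)
    (fun z _ => simple_mul_simple_cancel_right cs i)
  · rw [neg_one_pow_length_mul_simple, add_neg_cancel]
  · exact fun h => cs.length_mul_simple_ne z i (congrArg _ h)
  · obtain ⟨hyz, hzx⟩ := mem_bruhatInterval.mp hz
    refine mem_bruhatInterval.mpr ⟨?_, hzx.mul_simple_le hx⟩
    by_cases hz : cs.IsRightDescent z i
    · exact hyz.le_mul_simple_of_isRightDescent hz hy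
    · exact hyz.le_mul_simple hz

theorem sum_bruhatInterval_add_sum_bruhatInterval {R : Type*} [AddCommMonoid R] (f : W → R)
    {y x : W} {i : B} (hx : cs.IsRightDescent x i) (hy : cs.IsRightDescent y i) :
    ∑ z ∈ cs.bruhatInterval y x, f z + ∑ z ∈ cs.bruhatInterval (y * s i) (x * s i), f z =
      ∑ z ∈ cs.bruhatInterval (y * s i) x, f z + ∑ z ∈ cs.bruhatInterval y (x * s i), f z := by
  have hyy : BruhatLE cs (y * s i) y := (BruhatLE.refl cs y).mul_simple_le hy
  have hxx : BruhatLE cs (x * s i) x := (BruhatLE.refl cs x).mul_simple_le hx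
  have hunion : cs.bruhatInterval y x ∪ cs.bruhatInterval (y * s i) (x * s i) =
      cs.bruhatInterval (y * s i) x := by
    ext z
    simp only [mem_union, mem_bruhatInterval]
    constructor
    · rintro (⟨hyz, hzx⟩ | ⟨hyz, hzx⟩)
      · exact ⟨hyy.trans hyz, hzx⟩
      · exact ⟨hyz, hzx.trans hxx⟩
    · rintro ⟨hyz, hzx⟩
      by_cases hle : BruhatLE cs y z
      · exact .inl ⟨hle, hzx⟩
      by_cases hz : cs.IsRightDescent z i
      · have hyi := (isRightDescent_iff_not_isRightDescent_mul cs).mp hy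
        have hzi := (isRightDescent_iff_not_isRightDescent_mul cs).mp hz
        exact absurd (by simpa using (hyz.le_mul_simple_of_isRightDescent hz hyi).mul_simple hzi)
          hle
      · exact .inr ⟨hyz, hzx.le_mul_simple_of_isRightDescent hx hz⟩
  have hinter : cs.bruhatInterval y x ∩ cs.bruhatInterval (y * s i) (x * s i) =
      cs.bruhatInterval y (x * s i) := by
    ext z
    simp only [mem_inter, mem_bruhatInterval]
    constructor
    · rintro ⟨⟨hyz, -⟩, -, hzx⟩
      exact ⟨hyz, hzx⟩
    · rintro ⟨hyz, hzx⟩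
      exact ⟨⟨hyz, hzx.trans hxx⟩, hyy.trans hyz, hzx⟩
  rw [← hunion, ← hinter, sum_union_inter]

variable (cs)

theorem sum_bruhatInterval_neg_one_pow {y x : W} (hyx : y ≠ x) :
    ∑ z ∈ cs.bruhatInterval y x, (-1 : ℤ) ^ ℓ z = 0 := by
  induction hn : ℓ x using Nat.strong_induction_on generalizing x y with
  | _ n ih =>
  by_cases hle : BruhatLE cs y x
  swap
  · refine sum_eq_zero fun z hz => (hle ?_).elim
    obtain ⟨hyz, hzx⟩ := mem_bruhatInterval.mp hz
    exact hyz.trans hzx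
  have hx1 : x ≠ 1 := by
    rintro rfl
    have := hle.length_lt_of_ne hyx
    simp at this
  obtain ⟨i, hi⟩ := cs.exists_rightDescent_of_ne_one hx1
  by_cases hyi : cs.IsRightDescent y i
  · have hxi := (isRightDescent_iff_not_isRightDescent_mul cs).mp hi
    have hlt : ℓ (x * s i) < n := hn ▸ hi
    have key := sum_bruhatInterval_add_sum_bruhatInterval (fun z => (-1 : ℤ) ^ ℓ z) hi hyi
    rwa [ih _ hlt (mt (fun h => mul_right_cancel h) hyx) rfl,
      ih _ hlt (fun h : y = x * s i => hxi (h ▸ hyi)) rfl,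
      sum_bruhatInterval_neg_one_pow_of_not_isRightDescent hi
        ((isRightDescent_iff_not_isRightDescent_mul cs).mp hyi), add_zero, add_zero] at key
  · exact sum_bruhatInterval_neg_one_pow_of_not_isRightDescent hi hyi

theorem sum_bruhatInterval_neg_one_pow_sub {y x : W} (hyx : y ≠ x) :
    ∑ z ∈ cs.bruhatInterval y x, (-1 : ℤ) ^ (ℓ z - ℓ y) = 0 := by
  have hsplit : ∀ z ∈ cs.bruhatInterval y x, (-1 : ℤ) ^ ℓ z = (-1) ^ ℓ y * (-1) ^ (ℓ z - ℓ y) :=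
    fun z hz => by rw [← pow_add, Nat.add_sub_cancel' (mem_bruhatInterval.mp hz).1.length_le]
  have := cs.sum_bruhatInterval_neg_one_pow hyx
  rw [sum_congr rfl hsplit, ← mul_sum] at this
  exact (mul_eq_zero.mp this).resolve_left (pow_ne_zero _ (by norm_num))

end CoxeterSystem

theorem bruhat_mobius_general {B W : Type*} [Group W] [Fintype W]
    {M : CoxeterMatrix B} (cs : CoxeterSystem M W)
    (μ : W → W → ℤ)
    (hrefl : ∀ x : W, μ x x = 1)
    (hsum : ∀ y x : W, BruhatLE cs y x → y ≠ x →
      ∑ z ∈ univ.filter (fun z => BruhatLE cs y z ∧ BruhatLE cs z x), μ y z = 0) :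
    ∀ y x : W, BruhatLE cs y x →
      μ y x = (-1) ^ (cs.length x - cs.length y) :=
  eq_of_sum_filter_rel_eq_zero (BruhatLE cs) cs.length (BruhatLE.refl cs)
    (fun _ _ h hne => h.length_lt_of_ne hne) (fun x => by simp [hrefl]) hsum
    (fun _ _ _ hne => cs.sum_bruhatInterval_neg_one_pow_sub hne)

/-- The Möbius function of the Bruhat order on a (finite) Coxeter group is
`μ(y, x) = (-1)^(l(x) - l(y))` for all `y ≤ x`. -/
theorem bruhat_mobius {B W : Type*} [Group W] [Fintype W] [DecidableEq W]
    {M : CoxeterMatrix B} (cs : CoxeterSystem M W)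
    (μ : W → W → ℤ)
    (hrefl : ∀ x : W, μ x x = 1)
    (hsum : ∀ y x : W, BruhatLE cs y x → y ≠ x →
      ∑ z ∈ univ.filter (fun z => BruhatLE cs y z ∧ BruhatLE cs z x), μ y z = 0) :
    ∀ y x : W, BruhatLE cs y x →
      μ y x = (-1) ^ (cs.length x - cs.length y) :=
  bruhat_mobius_general cs μ hrefl hsum
end

section
/- Let $A$ be a finite-dimensional algebra and suppose the simple modules are indexed by a finite poset with rank function $l$ with maximal rank $N$, such that for each simple $L(\lambda)$ there is a module $\Delta(\lambda)$ of projective dimension at most $l(\lambda)$ with top $L(\lambda)$ whose radical has all composition factors $L(\mu)$ with $l(\mu) > l(\lambda)$, and $\Delta(\lambda) = L(\lambda)$ when $l(\lambda) = N$. Then the projective dimension of every simple module $L(\lambda)$ is at most $2N - l(\lambda)$, and the global dimension of $A$ is at most $2N$. -/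
/-!
Projective dimension is subadditive along short exact sequences: an extension of two modules of
projective dimension `≤ n` has projective dimension `≤ n` (horseshoe lemma), and a quotient
`M ⧸ K` with `pd M, pd K ≤ n` has projective dimension `≤ n + 1`. By downward induction on
`l λ`, the kernel of `Δ λ ↠ L λ` is filtered by simples `L μ` with `l μ > l λ`, so it and `Δ λ`
have projective dimension `≤ 2N - l λ - 1`, whence `pd L λ ≤ 2N - l λ`. Over the semiprimary
ring `A` every module is an iterated extension of its radical layers, which are semisimple, i.e.
direct sums of simples; so every module has projective dimension `≤ 2N`.
-/

universe u

/-- `pdLE A n M` means the `A`-module `M` has projective dimension at most `n`, i.e. it admits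
a projective resolution of length at most `n`. -/
def pdLE (A : Type u) [Ring A] : ℕ → ∀ (M : Type u) [AddCommGroup M] [Module A M], Prop
  | 0, M, _, _ => Module.Projective A M
  | n + 1, M, _, _ =>
      Module.Projective A M ∨
      ∃ (P : Type u) (_ : AddCommGroup P) (_ : Module A P) (f : P →ₗ[A] M),
        Module.Projective A P ∧ Function.Surjective f ∧ pdLE A n (LinearMap.ker f)

section

open DirectSum

variable {A : Type u} [Ring A] {n m : ℕ} {M M' : Type u} [AddCommGroup M] [Module A M]
  [AddCommGroup M'] [Module A M']

theorem pdLE_of_projective (h : Module.Projective A M) : pdLE A n M := by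
  cases n with
  | zero => exact h
  | succ n => exact Or.inl h

theorem pdLE_succ_iff :
    pdLE A (n + 1) M ↔
      ∃ (P : Type u) (_ : AddCommGroup P) (_ : Module A P) (f : P →ₗ[A] M),
        Module.Projective A P ∧ Function.Surjective f ∧ pdLE A n (LinearMap.ker f) := by
  refine ⟨fun h => h.elim (fun hM => ?_) id, Or.inr⟩
  have : Subsingleton (LinearMap.ker (LinearMap.id : M →ₗ[A] M)) := by
    rw [LinearMap.ker_id]; infer_instance
  exact ⟨M, _, _, LinearMap.id, hM, Function.surjective_id, pdLE_of_projective inferInstance⟩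

theorem pdLE.succ (h : pdLE A n M) : pdLE A (n + 1) M := by
  induction n generalizing M with
  | zero => exact Or.inl h
  | succ n ih =>
    obtain ⟨P, _, _, f, hP, hf, hker⟩ := pdLE_succ_iff.mp h
    exact pdLE_succ_iff.mpr ⟨P, _, _, f, hP, hf, ih hker⟩

theorem pdLE.mono (h : pdLE A n M) (hnm : n ≤ m) : pdLE A m M := by
  induction hnm with
  | refl => exact h
  | step _ ih => exact ih.succ

theorem pdLE.of_equiv (e : M ≃ₗ[A] M') (h : pdLE A n M) : pdLE A n M' := by
  cases n with
  | zero => have : Module.Projective A M := h; exact Module.Projective.of_equiv e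
  | succ n =>
    obtain ⟨P, _, _, f, hP, hf, hker⟩ := pdLE_succ_iff.mp h
    refine pdLE_succ_iff.mpr ⟨P, _, _, e.toLinearMap ∘ₗ f, hP, e.surjective.comp hf, ?_⟩
    rwa [LinearMap.ker_comp, LinearEquiv.ker, Submodule.comap_bot]

theorem pdLE_directSum {ι : Type u} {N : ι → Type u} [∀ i, AddCommGroup (N i)]
    [∀ i, Module A (N i)] (h : ∀ i, pdLE A n (N i)) : pdLE A n (⨁ i, N i) := by
  induction n generalizing ι N with
  | zero =>
    have : ∀ i, Module.Projective A (N i) := h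
    exact (inferInstance : Module.Projective A (⨁ i, N i))
  | succ n ih =>
    choose P _ _ f hP hf hker using fun i => pdLE_succ_iff.mp (h i)
    have hrange : LinearMap.range (DirectSum.lmap fun i => (LinearMap.ker (f i)).subtype) =
        LinearMap.ker (DirectSum.lmap f) := by
      rw [DirectSum.range_lmap, DirectSum.ker_lmap]
      simp only [Submodule.range_subtype]
    have hinj : Function.Injective (DirectSum.lmap fun i => (LinearMap.ker (f i)).subtype) :=
      DirectSum.lmap_injective _ |>.mpr fun i => Submodule.injective_subtype _
    refine pdLE_succ_iff.mpr ⟨⨁ i, P i, _, _, DirectSum.lmap f, inferInstance,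
      (DirectSum.lmap_surjective f).mpr hf, ?_⟩
    exact (ih hker).of_equiv ((LinearEquiv.ofInjective _ hinj).trans (LinearEquiv.ofEq _ _ hrange))

section Horseshoe

variable {K Q PK PQ : Type u} [AddCommGroup K] [Module A K] [AddCommGroup Q] [Module A Q]
  [AddCommGroup PK] [Module A PK] [AddCommGroup PQ] [Module A PQ]
  {f : K →ₗ[A] M} {g : M →ₗ[A] Q} {pK : PK →ₗ[A] K} {h : PQ →ₗ[A] M}

theorem surjective_coprod_of_exact (hfg : Function.Exact f g) (hpK : Function.Surjective pK)
    (hgh : Function.Surjective (g ∘ₗ h)) : Function.Surjective ((f ∘ₗ pK).coprod h) := by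
  intro x
  obtain ⟨q, hq⟩ := hgh (g x)
  obtain ⟨k, hk⟩ := (hfg (x - h q)).mp (by simp [← hq])
  obtain ⟨p, rfl⟩ := hpK k
  exact ⟨(p, q), by simp [hk]⟩

theorem exists_exact_ker_coprod (hf : Function.Injective f) (hfg : Function.Exact f g)
    (hpK : Function.Surjective pK) :
    ∃ (α : LinearMap.ker pK →ₗ[A] LinearMap.ker ((f ∘ₗ pK).coprod h))
      (β : LinearMap.ker ((f ∘ₗ pK).coprod h) →ₗ[A] LinearMap.ker (g ∘ₗ h)),
      Function.Injective α ∧ Function.Exact α β ∧ Function.Surjective β := by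
  have hgf : ∀ k, g (f k) = 0 := fun k => hfg.apply_apply_eq_zero k
  refine ⟨(LinearMap.inl A PK PQ).restrict fun x hx => by simp_all,
    (LinearMap.snd A PK PQ).restrict fun x hx => ?_, fun a b hab => ?_, ?_, ?_⟩
  · have hx : f (pK x.1) + h x.2 = 0 := hx
    simpa [hgf] using congrArg g hx
  · exact Subtype.ext (congrArg (fun z : LinearMap.ker _ => (z : PK × PQ).1) hab)
  · rintro ⟨⟨p, q⟩, hpq⟩
    have hpq : f (pK p) + h q = 0 := hpq
    constructor
    · intro hq
      have hq : q = 0 := congrArg Subtype.val hq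
      subst hq
      exact ⟨⟨p, hf (by simpa using hpq)⟩, rfl⟩
    · rintro ⟨y, hy⟩
      simp only [Subtype.ext_iff] at hy ⊢
      exact congrArg Prod.snd hy.symm
  · rintro ⟨q, hq⟩
    obtain ⟨k, hk⟩ := (hfg (h q)).mp hq
    obtain ⟨p, rfl⟩ := hpK k
    exact ⟨⟨(-p, q), by simp [hk]⟩, rfl⟩

end Horseshoe

theorem pdLE_of_exact {K Q : Type u} [AddCommGroup K] [Module A K] [AddCommGroup Q] [Module A Q]
    (f : K →ₗ[A] M) (g : M →ₗ[A] Q) (hf : Function.Injective f) (hfg : Function.Exact f g)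
    (hg : Function.Surjective g) (hK : pdLE A n K) (hQ : pdLE A n Q) : pdLE A n M := by
  induction n generalizing K M Q with
  | zero =>
    have : Module.Projective A K := hK
    have : Module.Projective A Q := hQ
    obtain ⟨l, hl⟩ := Module.projective_lifting_property g LinearMap.id hg
    exact Module.Projective.of_equiv (hfg.splitSurjectiveEquiv hf ⟨l, hl⟩).1.symm
  | succ n ih =>
    obtain ⟨PK, _, _, pK, hPK, hpK, hkK⟩ := pdLE_succ_iff.mp hK
    obtain ⟨PQ, _, _, pQ, hPQ, hpQ, hkQ⟩ := pdLE_succ_iff.mp hQ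
    obtain ⟨h, rfl⟩ := Module.projective_lifting_property g pQ hg
    obtain ⟨α, β, hα, hαβ, hβ⟩ := exists_exact_ker_coprod (h := h) hf hfg hpK
    exact pdLE_succ_iff.mpr ⟨PK × PQ, _, _, _, inferInstance,
      surjective_coprod_of_exact hfg hpK hpQ, ih α β hα hαβ hβ hkK hkQ⟩

theorem pdLE_of_submodule (N : Submodule A M) (hN : pdLE A n N) (hQ : pdLE A n (M ⧸ N)) :
    pdLE A n M :=
  pdLE_of_exact _ _ N.injective_subtype (LinearMap.exact_subtype_mkQ N) N.mkQ_surjective hN hQ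

theorem pdLE_succ_of_surjective (π : M →ₗ[A] M') (hπ : Function.Surjective π)
    (hM : pdLE A n M) (hK : pdLE A n (LinearMap.ker π)) : pdLE A (n + 1) M' := by
  obtain ⟨P, _, _, p, hP, hp, hker⟩ := pdLE_succ_iff.mp hM.succ
  refine pdLE_succ_iff.mpr ⟨P, _, _, π ∘ₗ p, hP, hπ.comp hp, ?_⟩
  have hle : LinearMap.ker p ≤ LinearMap.ker (π ∘ₗ p) := LinearMap.ker_le_ker_comp p π
  refine pdLE_of_exact (Submodule.inclusion hle) (p.restrict fun x hx => hx)
    (Submodule.inclusion_injective hle) ?_ ?_ hker hK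
  · rintro ⟨x, hx⟩
    simp only [Subtype.ext_iff]
    exact ⟨fun h => ⟨⟨x, h⟩, rfl⟩, fun ⟨y, hy⟩ => hy ▸ y.2⟩
  · rintro ⟨k, hk⟩
    obtain ⟨x, rfl⟩ := hp k
    exact ⟨⟨x, hk⟩, rfl⟩

theorem pdLE_of_filtration {r : ℕ} (F : Fin (r + 1) → Submodule A M) (hF : Monotone F)
    (h0 : F 0 = ⊥) (hlast : F (Fin.last r) = ⊤)
    (hfac : ∀ i : Fin r,
      pdLE A n (↥(F i.succ) ⧸ Submodule.comap (F i.succ).subtype (F i.castSucc))) :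
    pdLE A n M := by
  have hstep : ∀ j, pdLE A n (F j) := by
    intro j
    induction j using Fin.induction with
    | zero =>
      have : Subsingleton (F 0) := by rw [h0]; infer_instance
      exact pdLE_of_projective inferInstance
    | succ i ih =>
      have e := Submodule.comapSubtypeEquivOfLe (hF (Fin.castSucc_le_succ i))
      exact pdLE_of_submodule _ (ih.of_equiv e.symm) (hfac i)
  exact (hstep (Fin.last r)).of_equiv (LinearEquiv.ofTop _ hlast)

theorem pdLE_of_isSemisimpleModule [IsSemisimpleModule A M]
    (hS : ∀ (S : Type u) [AddCommGroup S] [Module A S], IsSimpleModule A S → pdLE A n S) :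
    pdLE A n M := by
  obtain ⟨s, e, hs⟩ := isSemisimpleModule_iff_exists_linearEquiv_dfinsupp.mp ‹_›
  exact (pdLE_directSum fun m : s => hS _ (hs m)).of_equiv e.symm

theorem pdLE_of_isSemiprimaryRing [IsSemiprimaryRing A]
    (hS : ∀ (S : Type u) [AddCommGroup S] [Module A S], IsSimpleModule A S → pdLE A n S) :
    pdLE A n M :=
  IsSemiprimaryRing.induction ℤ A M (P := fun M _ _ _ => pdLE A n M)
    (fun _ _ _ _ _ _ _ => pdLE_of_isSemisimpleModule hS)
    (fun _ _ _ _ _ hN hQ => pdLE_of_submodule _ hN hQ)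

end

theorem projDim_simples_and_global_dimension_general {k : Type u} [Field k]
    {A : Type u} [Ring A] [Algebra k A] [FiniteDimensional k A]
    {Λ : Type} (l : Λ → ℕ) (N : ℕ)
    (hl : ∀ lam, l lam ≤ N)
    (L Δ : Λ → Type u)
    [∀ lam, AddCommGroup (L lam)] [∀ lam, Module A (L lam)]
    [∀ lam, AddCommGroup (Δ lam)] [∀ lam, Module A (Δ lam)]
    (hall : ∀ (S : Type u) [AddCommGroup S] [Module A S], IsSimpleModule A S →
      ∃ lam, Nonempty (S ≃ₗ[A] L lam))
    (hpdΔ : ∀ lam, pdLE A (l lam) (Δ lam))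
    (π : ∀ lam, Δ lam →ₗ[A] L lam)
    (hπ : ∀ lam, Function.Surjective (π lam))
    (hfilt : ∀ lam, ∃ (n : ℕ) (F : Fin (n + 1) → Submodule A (LinearMap.ker (π lam))),
      Monotone F ∧ F 0 = ⊥ ∧ F (Fin.last n) = ⊤ ∧
      ∀ i : Fin n, ∃ μ, l lam < l μ ∧
        Nonempty ((↥(F i.succ) ⧸
          Submodule.comap (F i.succ).subtype (F i.castSucc)) ≃ₗ[A] L μ))
    (htop : ∀ lam, l lam = N → LinearMap.ker (π lam) = ⊥) :
    (∀ lam, pdLE A (2 * N - l lam) (L lam)) ∧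
    (∀ (M : Type u) [AddCommGroup M] [Module A M], pdLE A (2 * N) M) := by
  have hL : ∀ lam, pdLE A (2 * N - l lam) (L lam) := by
    intro lam
    induction hd : N - l lam using Nat.strong_induction_on generalizing lam with
    | _ d ih =>
    rcases (hl lam).lt_or_eq with hlt | heq
    · obtain ⟨r, F, hF, h0, hlast, hfac⟩ := hfilt lam
      have hK : pdLE A (2 * N - l lam - 1) (LinearMap.ker (π lam)) :=
        pdLE_of_filtration F hF h0 hlast fun i => by
          obtain ⟨μ, hμ, ⟨e⟩⟩ := hfac i
          exact ((ih _ (by omega) μ rfl).mono (by omega)).of_equiv e.symm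
      have hΔ := (hpdΔ lam).mono (show l lam ≤ 2 * N - l lam - 1 by omega)
      have := pdLE_succ_of_surjective _ (hπ lam) hΔ hK
      rwa [Nat.sub_add_cancel (by omega)] at this
    · have e := LinearEquiv.ofBijective (π lam) ⟨LinearMap.ker_eq_bot.mp (htop lam heq), hπ lam⟩
      exact ((hpdΔ lam).of_equiv e).mono (by omega)
  have : IsArtinianRing A := IsArtinianRing.of_finite k A
  refine ⟨hL, fun M _ _ => pdLE_of_isSemiprimaryRing fun S _ _ hS => ?_⟩
  obtain ⟨lam, ⟨e⟩⟩ := hall S hS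
  exact ((hL lam).mono (by omega)).of_equiv e.symm

/-- Let `A` be a finite-dimensional algebra whose simple modules `L λ` are indexed by a finite
poset with rank function `l` of maximal rank `N`, and suppose for each `λ` there is a module
`Δ λ` with `p.d.(Δ λ) ≤ l λ`, a surjection `Δ λ ↠ L λ` whose kernel has all composition
factors `L μ` with `l μ > l λ`, and `Δ λ = L λ` when `l λ = N`. Then
`p.d.(L λ) ≤ 2N - l λ` for every `λ`, and the global dimension of `A` is at most `2N`. -/
theorem projDim_simples_and_global_dimension {k : Type u} [Field k]
    {A : Type u} [Ring A] [Algebra k A] [FiniteDimensional k A]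
    {Λ : Type} [Fintype Λ] (l : Λ → ℕ) (N : ℕ)
    (hl : ∀ lam, l lam ≤ N)
    (L Δ : Λ → Type u)
    [∀ lam, AddCommGroup (L lam)] [∀ lam, Module A (L lam)]
    [∀ lam, AddCommGroup (Δ lam)] [∀ lam, Module A (Δ lam)]
    (hsimple : ∀ lam, IsSimpleModule A (L lam))
    (hall : ∀ (S : Type u) [AddCommGroup S] [Module A S], IsSimpleModule A S →
      ∃ lam, Nonempty (S ≃ₗ[A] L lam))
    (hpdΔ : ∀ lam, pdLE A (l lam) (Δ lam))
    (π : ∀ lam, Δ lam →ₗ[A] L lam)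
    (hπ : ∀ lam, Function.Surjective (π lam))
    (hfilt : ∀ lam, ∃ (n : ℕ) (F : Fin (n + 1) → Submodule A (LinearMap.ker (π lam))),
      Monotone F ∧ F 0 = ⊥ ∧ F (Fin.last n) = ⊤ ∧
      ∀ i : Fin n, ∃ μ, l lam < l μ ∧
        Nonempty ((↥(F i.succ) ⧸
          Submodule.comap (F i.succ).subtype (F i.castSucc)) ≃ₗ[A] L μ))
    (htop : ∀ lam, l lam = N → LinearMap.ker (π lam) = ⊥) :
    (∀ lam, pdLE A (2 * N - l lam) (L lam)) ∧
    (∀ (M : Type u) [AddCommGroup M] [Module A M], pdLE A (2 * N) M) :=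
  projDim_simples_and_global_dimension_general (k := k) l N hl L Δ hall hpdΔ π hπ hfilt htop
end
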